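/- arXiv:1707.02712 — 4 statements merged into one kernel-verified Lean document; each statement's English description precedes it below -/
import Mathlib

section
/- With the notation of the previous identity (T_0 = 1, T_jT_1 = T_{j+1} + ββ̄·T_{j−1}, B_n as defined), the difference of consecutive regularizing operators satisfies B_{n+1} − B_n = β^{−n−d−1}(T_{n+d} − T_n)/(1 − β^{−d}). -/
/-- The difference of consecutive regularizing operators:
B_{n+1} − B_n = β^{−n−d−1}·(T_{n+d} − T_n)/(1 − β^{−d}). -/
theorem stmt14 (K : Type*) [Field K] [CharZero K]
    (A : Type*) [Ring A] [Algebra K A]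
    (β βb : K) (hβ : β ≠ 0) (hβb : βb ≠ 0)
    (d : ℕ) (hd : 0 < d) (hunit : 1 - β⁻¹ ^ d ≠ 0)
    (T : ℕ → A) (hT0 : T 0 = 1)
    (hrec : ∀ j ≥ 1, T j * T 1 = T (j + 1) + (β * βb) • T (j - 1))
    (n : ℕ) :
    (∑ j ∈ Finset.range (n + 1), β⁻¹ ^ (j + 1) • T j
        + ∑ j ∈ Finset.range d,
            (β⁻¹ ^ (n + 1 + j + 1) / (1 - β⁻¹ ^ d)) • T (n + 1 + j))
      - (∑ j ∈ Finset.range n, β⁻¹ ^ (j + 1) • T j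
        + ∑ j ∈ Finset.range d,
            (β⁻¹ ^ (n + j + 1) / (1 - β⁻¹ ^ d)) • T (n + j))
    = (β⁻¹ ^ (n + d + 1) / (1 - β⁻¹ ^ d)) • (T (n + d) - T n) := by
  obtain ⟨m, rfl⟩ : ∃ m, d = m + 1 := ⟨d - 1, (Nat.succ_pred_eq_of_pos hd).symm⟩
  rw [Finset.sum_range_succ (fun j => β⁻¹ ^ (j + 1) • T j),
    Finset.sum_range_succ (fun j => (β⁻¹ ^ (n + 1 + j + 1) / (1 - β⁻¹ ^ (m + 1))) • T (n + 1 + j)),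
    Finset.sum_range_succ' (fun j => (β⁻¹ ^ (n + j + 1) / (1 - β⁻¹ ^ (m + 1))) • T (n + j))]
  have hcongr : (∑ j ∈ Finset.range m,
      (β⁻¹ ^ (n + 1 + j + 1) / (1 - β⁻¹ ^ (m + 1))) • T (n + 1 + j))
      = ∑ j ∈ Finset.range m,
      (β⁻¹ ^ (n + (j + 1) + 1) / (1 - β⁻¹ ^ (m + 1))) • T (n + (j + 1)) := by
    apply Finset.sum_congr rfl
    intro j _
    ring_nf
  rw [hcongr]
  have hscal : ∀ b : K, 1 - b ^ (m + 1) ≠ 0 → b ^ (n + 1) - b ^ (n + 0 + 1) / (1 - b ^ (m + 1))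
      = -(b ^ (n + (m + 1) + 1) / (1 - b ^ (m + 1))) := by
    intro b hb
    field_simp
    ring
  have : (β⁻¹ ^ (n + 1) • T n - (β⁻¹ ^ (n + 0 + 1) / (1 - β⁻¹ ^ (m + 1))) • T n)
      = -((β⁻¹ ^ (n + (m + 1) + 1) / (1 - β⁻¹ ^ (m + 1))) • T n) := by
    rw [← sub_smul, hscal β⁻¹ hunit, neg_smul]
  have h2 : n + 1 + m = n + (m + 1) := by ring
  rw [h2, smul_sub]
  simp only [Nat.add_zero] at this ⊢
  linear_combination (norm := abel) this
end

section
/- Let p ≥ 3 and e > 0 be real numbers, and for a nonnegative integer n consider the function f(ℓ) = n − ℓ + p^ℓ/e on the real interval [0, n]. Then f(ℓ) ≥ n + c_e for all ℓ ∈ [0, n], where c_e = 1/e if e ≤ log p, and c_e = (−log e + 1 + log log p)/log p if e ≥ log p. -/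
/-- For p ≥ 3, e > 0 and ℓ ∈ [0, n], one has n − ℓ + p^ℓ/e ≥ n + c_e, where
c_e = 1/e if e ≤ log p and c_e = (−log e + 1 + log log p)/log p otherwise. -/
theorem stmt16 (p e : ℝ) (hp : 3 ≤ p) (he : 0 < e)
    (n : ℕ) (l : ℝ) (hl0 : 0 ≤ l) (hln : l ≤ (n : ℝ)) :
    (n : ℝ) - l + p ^ l / e ≥ (n : ℝ) +
      (if e ≤ Real.log p then 1 / e
        else (-Real.log e + 1 + Real.log (Real.log p)) / Real.log p) := by
  have hp0 : (0 : ℝ) < p := by linarith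
  have hL1 : 1 < Real.log p := by
    calc (1 : ℝ) < Real.log 3 := by
          rw [show (1:ℝ) = Real.log (Real.exp 1) by simp]
          exact Real.log_lt_log (Real.exp_pos 1) (by
            have := Real.exp_one_lt_d9; linarith)
      _ ≤ Real.log p := Real.log_le_log (by norm_num) hp
  have hL0 : 0 < Real.log p := by linarith
  set L := Real.log p with hLdef
  have hrpow : p ^ l = Real.exp (l * L) := by
    rw [Real.rpow_def_of_pos hp0, mul_comm]
  split_ifs with hcase
  · -- e ≤ log p : use exp(t) ≥ 1 + t
    rw [hrpow]
    have h1 : 1 + l * e ≤ Real.exp (l * L) := by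
      nlinarith [Real.add_one_le_exp (l * L)]
    have h3 : 1 / e + l ≤ Real.exp (l * L) / e := by
      rw [div_add' _ _ _ he.ne']
      exact (div_le_div_iff_of_pos_right he).mpr (by linarith)
    linarith
  · -- e > log p : tangent at a = log e - log L
    have hlt : L < e := lt_of_not_ge hcase
    set a := Real.log e - Real.log L with hadef
    have hexpa : Real.exp a = e / L := by
      rw [hadef, Real.exp_sub, Real.exp_log he, Real.exp_log hL0]
    have hexpaL : Real.exp a * L = e := by
      rw [hexpa]; field_simp
    have key : Real.exp a * (1 + (l * L - a)) ≤ Real.exp (l * L) := by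
      calc Real.exp a * (1 + (l * L - a)) ≤ Real.exp a * Real.exp (l * L - a) := by
            nlinarith [Real.exp_pos a, Real.add_one_le_exp (l * L - a)]
        _ = Real.exp (l * L) := by rw [← Real.exp_add]; ring_nf
    have h6 : e * (1 + (l * L - a)) ≤ Real.exp (l * L) * L := by
      have heq : e * (1 + (l * L - a)) = Real.exp a * (1 + (l * L - a)) * L := by
        rw [← hexpaL]; ring
      rw [heq]
      exact mul_le_mul_of_nonneg_right key hL0.le
    rw [hadef] at h6
    rw [hrpow]
    have h8 : (-Real.log e + 1 + Real.log L) / L + l ≤ Real.exp (l * L) / e := by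
      rw [div_add' _ _ _ hL0.ne', div_le_div_iff₀ hL0 he]
      nlinarith [h6]
    linarith
end

section
/- Let N be a squarefree positive integer and γ = (a b; c d) ∈ SL₂(ℤ). Set δ = N/gcd(N, c). Then there exist integers j, a', b', c', d' with a'·δ·d'·δ − b'·N·c' = δ (i.e. the matrix W = (δa' b'; Nc' δd') has determinant δ) such that γ = W · (1 j; 0 δ) · (1/δ)·I, i.e. δ·γ = W·(1 j; 0 δ) as integer matrices; moreover j can be chosen with j ≡ d·c^{-1} (mod δ) when gcd(c, δ) = 1. -/
/-- δ = N / gcd(N, c), as an integer. -/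
def deltaOf (N : ℕ) (c : ℤ) : ℤ := ((N / Nat.gcd N c.natAbs : ℕ) : ℤ)

/-- Factorization of γ ∈ SL₂(ℤ): δ·γ = W_δ·(1 j; 0 δ) with W_δ an
Atkin–Lehner matrix (δa' b'; Nc' δd') of determinant δ, and j ≡ d·c⁻¹ (mod δ)
when gcd(c, δ) = 1. -/
theorem stmt18 (N : ℕ) (hN0 : 0 < N) (hsq : Squarefree N)
    (a b c d : ℤ) (hdet : a * d - b * c = 1) :
    ∃ j a' b' c' d' : ℤ,
      (deltaOf N c * a') * (deltaOf N c * d') - b' * ((N : ℤ) * c') = deltaOf N c ∧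
      (deltaOf N c) • !![a, b; c, d] =
        !![deltaOf N c * a', b'; (N : ℤ) * c', deltaOf N c * d'] *
          !![1, j; 0, deltaOf N c] ∧
      (IsCoprime c (deltaOf N c) → (deltaOf N c) ∣ (j * c - d)) := by
  set g : ℕ := Nat.gcd N c.natAbs with hg
  set δn : ℕ := N / g with hδn
  have hgN : g ∣ N := Nat.gcd_dvd_left _ _
  have hmul : g * δn = N := Nat.mul_div_cancel' hgN
  have hδ : deltaOf N c = (δn : ℤ) := rfl
  -- coprimality of g and δn
  have hcop : Nat.Coprime g δn := by
    have : Squarefree (g * δn) := by rw [hmul]; exact hsq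
    exact ((Nat.squarefree_mul_iff).mp this).1
  -- c.natAbs coprime to δn
  have hccop : Nat.Coprime c.natAbs δn := by
    have hk : Nat.gcd c.natAbs δn ∣ g := by
      refine Nat.dvd_gcd ?_ (Nat.gcd_dvd_left _ _)
      exact (Nat.gcd_dvd_right _ _).trans (Nat.div_dvd_of_dvd hgN)
    have : Nat.gcd c.natAbs δn ∣ Nat.gcd g δn :=
      Nat.dvd_gcd hk (Nat.gcd_dvd_right _ _)
    rw [hcop] at this
    exact Nat.dvd_one.mp this
  have hcopZ : IsCoprime c (deltaOf N c) := by
    rw [Int.isCoprime_iff_gcd_eq_one, hδ]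
    simpa [Int.gcd] using hccop
  obtain ⟨u, v, huv⟩ := hcopZ
  -- c' with (g:ℤ) * c' = c
  have hgc : (g : ℤ) ∣ c := by
    have h1 : (g : ℤ) ∣ (c.natAbs : ℤ) :=
      Int.natCast_dvd_natCast.mpr (Nat.gcd_dvd_right _ _)
    exact h1.trans (Int.natAbs_dvd.mpr dvd_rfl)
  obtain ⟨c', hc'⟩ := hgc
  have hNδ : (N : ℤ) = (g : ℤ) * deltaOf N c := by
    rw [hδ]; exact_mod_cast hmul.symm
  set δ := deltaOf N c with hδdef
  refine ⟨u * d, a, b - a * (u * d), c', v * d, ?_, ?_, ?_⟩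
  · -- determinant
    have hjd : c * (u * d) + δ * (v * d) = d := by
      linear_combination d * huv
    have hNc' : (N : ℤ) * c' = δ * c := by
      rw [hNδ, hc']; ring
    linear_combination (-(b - a * (u * d))) * hNc' + (δ * a) * hjd + δ * hdet
  · ext i jj
    fin_cases i <;> fin_cases jj <;>
      simp [Matrix.mul_apply, Fin.sum_univ_two]
    · ring
    · have : (N : ℤ) * c' = δ * c := by rw [hNδ, hc']; ring
      linarith [this]
    · have hNc' : (N : ℤ) * c' = δ * c := by rw [hNδ, hc']; ring
      have hjd : c * (u * d) + δ * (v * d) = d := by linear_combination d * huv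
      linear_combination (-(u * d)) * hNc' - δ * hjd
  · intro _
    have hjd : c * (u * d) + δ * (v * d) = d := by linear_combination d * huv
    exact ⟨-(v * d), by linear_combination hjd⟩
end

section
/- Let p be a prime, K a complete discretely valued field extension of ℚ_p with valuation ring O, ramification index e and residue field of size p^d. Let t ∈ O and let ζ ∈ O satisfy ζ^{p^d} = ζ and v(t − ζ) > 0 (valuation normalized so v(p) = 1, values in (1/e)ℤ). Then for every n ≥ 0, v(t^{p^n} − ζ^{p^n}) ≥ n + c_e, where c_e = 1/e if e ≤ log p and c_e = (−log e + 1 + log log p)/log p otherwise. -/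
/-!
Write `t = ζ + b` with `v b ≥ 1/e`. Since `ζ` is a root of unity, `v ζ = 0`, and the binomial
theorem writes `t^{p^n} − ζ^{p^n}` as a sum of terms `C(p^n, j) ζ^{p^n−j} b^j`, `1 ≤ j ≤ p^n`, of
valuation at least `n − v_p(j) + j/e`. With `k = v_p(j)` we have `j ≥ p^k`, so it suffices that
`c_e ≤ p^k/e − k` for every `k`: for `e ≤ log p` this is `k e ≤ log (p^k) ≤ p^k − 1`, and otherwise
it is `log x ≤ x − 1` at `x = p^k log p / e`.
-/

open Finset

/-- The constant `c_e` of the paper. -/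
noncomputable def ramificationConst (p e : ℕ) : ℝ :=
  if (e : ℝ) ≤ Real.log p then 1 / (e : ℝ)
  else (-Real.log e + 1 + Real.log (Real.log p)) / Real.log p

theorem ramificationConst_le {p e : ℕ} (hp : 1 < p) (he : 0 < e) (k : ℕ) :
    ramificationConst p e ≤ (p : ℝ) ^ k / e - k := by
  have hp' : (1 : ℝ) < p := by exact_mod_cast hp
  have hlogp : 0 < Real.log p := Real.log_pos hp'
  have he' : (0 : ℝ) < e := by exact_mod_cast he
  have hpk : (0 : ℝ) < (p : ℝ) ^ k := by positivity
  unfold ramificationConst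
  split_ifs with hep
  · have hke : (k : ℝ) * e ≤ (p : ℝ) ^ k - 1 :=
      calc (k : ℝ) * e ≤ k * Real.log p := by gcongr
        _ = Real.log ((p : ℝ) ^ k) := (Real.log_pow _ _).symm
        _ ≤ (p : ℝ) ^ k - 1 := Real.log_le_sub_one_of_pos hpk
    rw [le_sub_iff_add_le, div_add' _ _ _ he'.ne', div_le_div_iff_of_pos_right he']
    linarith
  · have hlog : Real.log ((p : ℝ) ^ k * Real.log p / e) ≤ (p : ℝ) ^ k * Real.log p / e - 1 :=
      Real.log_le_sub_one_of_pos (by positivity)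
    rw [Real.log_div (by positivity) he'.ne', Real.log_mul hpk.ne' hlogp.ne', Real.log_pow]
      at hlog
    rw [div_le_iff₀ hlogp, sub_mul, div_mul_eq_mul_div]
    linarith

theorem add_ramificationConst_le {p e n j : ℕ} (hp : p.Prime) (he : 0 < e) (hj0 : j ≠ 0)
    (hjn : j ≤ p ^ n) :
    n + ramificationConst p e ≤ (j : ℝ) / e + ((p ^ n).choose j).factorization p := by
  set k := j.factorization p
  have hchoose : ((p ^ n).choose j).factorization p + k = n :=
    Nat.factorization_choose_prime_pow_add_factorization hp hjn hj0
  have hpk : (p : ℝ) ^ k ≤ j := by exact_mod_cast Nat.ordProj_le p hj0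
  have hc := ramificationConst_le hp.one_lt he k
  have hpkj : (p : ℝ) ^ k / e ≤ j / e := by gcongr
  have : (n : ℝ) = ((p ^ n).choose j).factorization p + k := by exact_mod_cast hchoose.symm
  linarith

section Valuation

variable {K : Type*} [Field K] {v : K → ℝ}

theorem val_pow (hv1 : v 1 = 0)
    (hvmul : ∀ x y : K, x ≠ 0 → y ≠ 0 → v (x * y) = v x + v y) (x : K) :
    ∀ m : ℕ, x ^ m ≠ 0 → v (x ^ m) = m * v x
  | 0, _ => by simp [hv1]
  | m + 1, h => by
    have hx : x ≠ 0 := ne_zero_pow m.succ_ne_zero h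
    rw [pow_succ, hvmul _ _ (pow_ne_zero m hx) hx, val_pow hv1 hvmul x m (pow_ne_zero m hx)]
    push_cast
    ring

theorem le_val_sum
    (hvadd : ∀ x y : K, x ≠ 0 → y ≠ 0 → x + y ≠ 0 → min (v x) (v y) ≤ v (x + y))
    {ι : Type*} (c : ℝ) (s : Finset ι) (f : ι → K) (hf : ∀ i ∈ s, f i ≠ 0 → c ≤ v (f i))
    (hs : ∑ i ∈ s, f i ≠ 0) : c ≤ v (∑ i ∈ s, f i) := by
  classical
  induction s using Finset.induction with
  | empty => simp at hs
  | insert a s ha ih =>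
    have hf' : ∀ i ∈ s, f i ≠ 0 → c ≤ v (f i) := fun i hi => hf i (mem_insert_of_mem hi)
    rw [sum_insert ha] at hs ⊢
    by_cases ha0 : f a = 0
    · rw [ha0, zero_add] at hs ⊢
      exact ih hf' hs
    by_cases hs0 : ∑ i ∈ s, f i = 0
    · rw [hs0, add_zero]
      exact hf a (mem_insert_self a s) ha0
    exact (le_min (hf a (mem_insert_self a s) ha0) (ih hf' hs0)).trans (hvadd _ _ ha0 hs0 hs)

theorem val_natCast {p : ℕ} (hp : p.Prime) (hv1 : v 1 = 0)
    (hvmul : ∀ x y : K, x ≠ 0 → y ≠ 0 → v (x * y) = v x + v y) (hvp : v (p : K) = 1)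
    (hvint : ∀ m : ℤ, ¬ ((p : ℤ) ∣ m) → m ≠ 0 → v (m : K) = 0)
    {m : ℕ} (hm : (m : K) ≠ 0) : v (m : K) = m.factorization p := by
  have hm0 : m ≠ 0 := by rintro rfl; exact hm Nat.cast_zero
  set a := m.factorization p
  set c := m / p ^ a
  have hsplit : (m : K) = (p : K) ^ a * (c : K) := by
    rw [← Nat.cast_pow, ← Nat.cast_mul, Nat.ordProj_mul_ordCompl_eq_self m p]
  rw [hsplit] at hm ⊢
  obtain ⟨hpa, hc⟩ := mul_ne_zero_iff.mp hm
  have hvc : v (c : K) = 0 := by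
    have := hvint c (by exact_mod_cast Nat.not_dvd_ordCompl hp hm0)
      (by exact_mod_cast (Nat.ordCompl_pos p hm0).ne')
    rwa [Int.cast_natCast] at this
  rw [hvmul _ _ hpa hc, val_pow hv1 hvmul _ a hpa, hvp, hvc]
  ring

theorem val_pow_eq_zero_of_pow_eq_self (hv1 : v 1 = 0)
    (hvmul : ∀ x y : K, x ≠ 0 → y ≠ 0 → v (x * y) = v x + v y)
    {q : ℕ} (hq : 1 < q) {ζ : K} (hζ : ζ ^ q = ζ) (m : ℕ) (hm : ζ ^ m ≠ 0) :
    v (ζ ^ m) = 0 := by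
  rw [val_pow hv1 hvmul ζ m hm]
  rcases Nat.eq_zero_or_pos m with rfl | hmpos
  · simp
  have hζ0 : ζ ≠ 0 := ne_zero_pow hmpos.ne' hm
  have hunit : ζ ^ (q - 1) = 1 := by
    apply mul_right_cancel₀ hζ0
    rw [← pow_succ, Nat.sub_add_cancel hq.le, hζ, one_mul]
  have h := val_pow hv1 hvmul ζ (q - 1) (by rw [hunit]; exact one_ne_zero)
  rw [hunit, hv1, eq_comm, mul_eq_zero, Nat.cast_eq_zero] at h
  rw [h.resolve_left (by omega), mul_zero]

theorem one_div_le_val {e : ℕ} (he : 0 < e)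
    (hdisc : ∀ x : K, x ≠ 0 → ∃ m : ℤ, v x = (m : ℝ) / (e : ℝ))
    {x : K} (hx : x ≠ 0) (hpos : 0 < v x) : 1 / (e : ℝ) ≤ v x := by
  obtain ⟨m, hm⟩ := hdisc x hx
  have he' : (0 : ℝ) < e := by exact_mod_cast he
  rw [hm] at hpos ⊢
  have hm1 : (1 : ℝ) ≤ m := by
    have : (0 : ℝ) < m := (div_pos_iff_of_pos_right he').mp hpos
    exact_mod_cast (show (0 : ℤ) < m by exact_mod_cast this)
  gcongr

theorem le_val_add_pow_prime_pow_sub {p : ℕ} (hp : p.Prime) (hv1 : v 1 = 0)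
    (hvmul : ∀ x y : K, x ≠ 0 → y ≠ 0 → v (x * y) = v x + v y)
    (hvadd : ∀ x y : K, x ≠ 0 → y ≠ 0 → x + y ≠ 0 → min (v x) (v y) ≤ v (x + y))
    (hvp : v (p : K) = 1) (hvint : ∀ m : ℤ, ¬ ((p : ℤ) ∣ m) → m ≠ 0 → v (m : K) = 0)
    {e : ℕ} (he : 0 < e) {q : ℕ} (hq : 1 < q) {b ζ : K} (hb : 1 / (e : ℝ) ≤ v b)
    (hζ : ζ ^ q = ζ) (n : ℕ) (hne : (b + ζ) ^ p ^ n - ζ ^ p ^ n ≠ 0) :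
    n + ramificationConst p e ≤ v ((b + ζ) ^ p ^ n - ζ ^ p ^ n) := by
  set N := p ^ n
  have hexpand : (b + ζ) ^ N - ζ ^ N =
      ∑ i ∈ range N, b ^ (i + 1) * ζ ^ (N - (i + 1)) * (N.choose (i + 1) : K) := by
    rw [add_pow, sum_range_succ']
    simp
  rw [hexpand] at hne ⊢
  refine le_val_sum hvadd _ _ _ (fun i hi hterm => ?_) hne
  obtain ⟨⟨hbj, hζj⟩, hC⟩ := mul_ne_zero_iff.mp hterm |>.imp_left mul_ne_zero_iff.mp
  have hiN : i + 1 ≤ N := mem_range.mp hi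
  have hval : v (b ^ (i + 1) * ζ ^ (N - (i + 1)) * (N.choose (i + 1) : K)) =
      (i + 1 : ℕ) * v b + (N.choose (i + 1)).factorization p := by
    rw [hvmul _ _ (mul_ne_zero hbj hζj) hC, hvmul _ _ hbj hζj, val_pow hv1 hvmul b _ hbj,
      val_pow_eq_zero_of_pow_eq_self hv1 hvmul hq hζ _ hζj,
      val_natCast hp hv1 hvmul hvp hvint hC, add_zero]
  have hjb : ((i + 1 : ℕ) : ℝ) / e ≤ (i + 1 : ℕ) * v b := by
    rw [div_eq_mul_one_div]
    gcongr
  rw [hval]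
  linarith [add_ramificationConst_le hp he i.succ_ne_zero hiN]

end Valuation

theorem stmt19_general (p : ℕ) (hp : p.Prime) (K : Type*) [Field K]
    (v : K → ℝ) (hv1 : v 1 = 0)
    (hvmul : ∀ x y : K, x ≠ 0 → y ≠ 0 → v (x * y) = v x + v y)
    (hvadd : ∀ x y : K, x ≠ 0 → y ≠ 0 → x + y ≠ 0 → min (v x) (v y) ≤ v (x + y))
    (hvp : v ((p : K)) = 1)
    (hvint : ∀ m : ℤ, ¬ ((p : ℤ) ∣ m) → m ≠ 0 → v ((m : K)) = 0)
    (e : ℕ) (he : 0 < e)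
    (hdisc : ∀ x : K, x ≠ 0 → ∃ m : ℤ, v x = (m : ℝ) / (e : ℝ))
    (dd : ℕ) (hdd : 0 < dd)
    (t ζ : K) (hζpow : ζ ^ p ^ dd = ζ)
    (hclose : t = ζ ∨ (t - ζ ≠ 0 ∧ 0 < v (t - ζ))) :
    ∀ n : ℕ, t ^ p ^ n = ζ ^ p ^ n ∨
      v (t ^ p ^ n - ζ ^ p ^ n) ≥ (n : ℝ) +
        (if (e : ℝ) ≤ Real.log p then 1 / (e : ℝ)
          else (-Real.log e + 1 + Real.log (Real.log p)) / Real.log p) := by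
  intro n
  rcases hclose with rfl | ⟨hb0, hbpos⟩
  · exact Or.inl rfl
  by_cases heq : t ^ p ^ n = ζ ^ p ^ n
  · exact Or.inl heq
  right
  have hb := one_div_le_val he hdisc hb0 hbpos
  have hne : (t - ζ + ζ) ^ p ^ n - ζ ^ p ^ n ≠ 0 := by rwa [sub_add_cancel, sub_ne_zero]
  have := le_val_add_pow_prime_pow_sub hp hv1 hvmul hvadd hvp hvint he
    (Nat.one_lt_pow hdd.ne' hp.one_lt) hb hζpow n hne
  rwa [sub_add_cancel] at this

/-- Key quantitative estimate: in a (completely) valued field K/ℚ_p with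
ramification index e and residue field of size p^d, if ζ^{p^d} = ζ and
t ≡ ζ modulo the maximal ideal, then v(t^{p^n} − ζ^{p^n}) ≥ n + c_e. -/
theorem stmt19 (p : ℕ) (hp : p.Prime) (K : Type*) [Field K] [CharZero K]
    (v : K → ℝ) (hv1 : v 1 = 0)
    (hvmul : ∀ x y : K, x ≠ 0 → y ≠ 0 → v (x * y) = v x + v y)
    (hvadd : ∀ x y : K, x ≠ 0 → y ≠ 0 → x + y ≠ 0 → min (v x) (v y) ≤ v (x + y))
    (hvp : v ((p : K)) = 1)
    (hvint : ∀ m : ℤ, ¬ ((p : ℤ) ∣ m) → m ≠ 0 → v ((m : K)) = 0)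
    (e : ℕ) (he : 0 < e)
    (hdisc : ∀ x : K, x ≠ 0 → ∃ m : ℤ, v x = (m : ℝ) / (e : ℝ))
    (dd : ℕ) (hdd : 0 < dd)
    (t ζ : K) (ht : 0 ≤ v t ∨ t = 0) (hζpow : ζ ^ p ^ dd = ζ)
    (hclose : t = ζ ∨ (t - ζ ≠ 0 ∧ 0 < v (t - ζ))) :
    ∀ n : ℕ, t ^ p ^ n = ζ ^ p ^ n ∨
      v (t ^ p ^ n - ζ ^ p ^ n) ≥ (n : ℝ) +
        (if (e : ℝ) ≤ Real.log p then 1 / (e : ℝ)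
          else (-Real.log e + 1 + Real.log (Real.log p)) / Real.log p) :=
  stmt19_general p hp K v hv1 hvmul hvadd hvp hvint e he hdisc dd hdd t ζ hζpow hclose
end
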